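/- Let t = (a_s:b_s, ..., a_2:b_2, a_1:b_1) be a nonempty index tuple in column standard form with indices from {0,...,k-1}, k ≥ 1, and let x ∈ {0,...,b_s - 1} be an index such that (t, x) satisfies the SIP. Then the number of strings in the column standard form of (t, x) equals the number of strings of t (i.e., x is of Type I relative to t) if and only if x - 1 ∈ heads(t) = {b_1, ..., b_s}. In particular, x = 0 is always of Type II (the number of strings increases by one). -/

import Mathlib

/-!
An entry of a tuple ends a string exactly when its successor does not occur later; the number of
such entries is invariant under commuting swaps and equals the number of strings of a column
standard form, so it computes the string count. For a column standard form `t`, appending `x`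
creates a new string unless `x = b_j + 1` for a head `b_j`. The SIP rules out `x = b_i`, since
everything after the head `b_i` lies below it. Hence if `x = b_j + 1` it commutes to the left
past all lower strings and extends the string ending at `b_j`, keeping the heads increasing;
and `x = 0` forms a new bottom string `0:0`.
-/

/-- The Successor Infix Property. -/
def SIP (l : List ℕ) : Prop :=
  ∀ (a b : ℕ) (ha : a < l.length) (hb : b < l.length), a < b →
    l.get ⟨a, ha⟩ = l.get ⟨b, hb⟩ →
    ∃ (c : ℕ) (hc : c < l.length), a < c ∧ c < b ∧
      l.get ⟨c, hc⟩ = l.get ⟨a, ha⟩ + 1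

/-- Equivalence of index tuples: generated by interchanging two adjacent
distinct commuting indices (indices `x ≠ y` with `|x - y| ≠ 1`). -/
inductive TupleEquiv : List ℕ → List ℕ → Prop
  | refl (l : List ℕ) : TupleEquiv l l
  | swap (u v : List ℕ) (x y : ℕ) (hxy : x ≠ y) (h1 : x ≠ y + 1) (h2 : y ≠ x + 1) :
      TupleEquiv (u ++ x :: y :: v) (u ++ y :: x :: v)
  | trans {l1 l2 l3 : List ℕ} :
      TupleEquiv l1 l2 → TupleEquiv l2 l3 → TupleEquiv l1 l3

/-- The tuple `(a_{s-1}:b_{s-1}, ..., a_0:b_0)` as a list, heads decreasing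
left to right. -/
def csfList (s : ℕ) (a b : ℕ → ℕ) : List ℕ :=
  ((List.range s).reverse).flatMap fun j => List.range' (a j) (b j + 1 - a j)

/-- The column standard form of `l` has `m` strings. -/
def StringCount (l : List ℕ) (m : ℕ) : Prop :=
  ∃ (a b : ℕ → ℕ),
    (∀ i j : ℕ, i < j → j < m → b i < b j) ∧ (∀ j < m, a j ≤ b j) ∧
    TupleEquiv l (csfList m a b)

def numStrings : List ℕ → ℕ
  | [] => 0
  | y :: l => numStrings l + if y + 1 ∈ l then 0 else 1

lemma numStrings_swap (u v : List ℕ) {x y : ℕ} (h1 : x ≠ y + 1) (h2 : y ≠ x + 1) :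
    numStrings (u ++ x :: y :: v) = numStrings (u ++ y :: x :: v) := by
  induction u with
  | nil =>
    have hx : x + 1 ∈ y :: v ↔ x + 1 ∈ v := by grind
    have hy : y + 1 ∈ x :: v ↔ y + 1 ∈ v := by grind
    simp only [List.nil_append, numStrings, if_congr hx rfl rfl, if_congr hy rfl rfl]
    omega
  | cons z u ih =>
    have hz : z + 1 ∈ u ++ x :: y :: v ↔ z + 1 ∈ u ++ y :: x :: v := by grind
    simp only [List.cons_append, numStrings, ih, if_congr hz rfl rfl]

lemma TupleEquiv.numStrings_eq {l l' : List ℕ} (h : TupleEquiv l l') :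
    numStrings l = numStrings l' := by
  induction h with
  | refl => rfl
  | swap u v x y _ h1 h2 => exact numStrings_swap u v h1 h2
  | trans _ _ ih1 ih2 => exact ih1.trans ih2

lemma TupleEquiv.append_left {l l' : List ℕ} (h : TupleEquiv l l') (w : List ℕ) :
    TupleEquiv (w ++ l) (w ++ l') := by
  induction h with
  | refl => exact .refl _
  | swap u v x y hxy h1 h2 => simpa using TupleEquiv.swap (w ++ u) v x y hxy h1 h2
  | trans _ _ ih1 ih2 => exact ih1.trans ih2

lemma TupleEquiv.concat_cons {l : List ℕ} {x : ℕ} (hl : ∀ y ∈ l, y + 1 < x) :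
    TupleEquiv (l ++ [x]) (x :: l) := by
  induction l with
  | nil => exact .refl _
  | cons y l ih =>
    have hy := hl y List.mem_cons_self
    have hmove := (ih fun z hz => hl z (List.mem_cons_of_mem y hz)).append_left [y]
    exact hmove.trans (TupleEquiv.swap [] l y x (by omega) (by omega) (by omega))

lemma numStrings_range'_append (c n : ℕ) (v : List ℕ) :
    numStrings (List.range' c (n + 1) ++ v) =
      numStrings v + if c + n + 1 ∈ v then 0 else 1 := by
  induction n generalizing c with
  | zero => simp [numStrings]
  | succ n ih =>
    have hmem : c + 1 ∈ List.range' (c + 1) (n + 1) ++ v := by simp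
    rw [List.range'_succ, List.cons_append, numStrings, if_pos hmem, ih, add_zero,
      add_right_comm c 1 n, add_assoc c n 1]

lemma csfList_succ (m : ℕ) (a b : ℕ → ℕ) :
    csfList (m + 1) a b = List.range' (a m) (b m + 1 - a m) ++ csfList m a b := by
  simp [csfList, List.range_succ]

lemma csfList_succ_eq_append (m : ℕ) (a b : ℕ → ℕ) :
    csfList (m + 1) a b =
      csfList m (fun i => a (i + 1)) (fun i => b (i + 1)) ++ List.range' (a 0) (b 0 + 1 - a 0) := by
  induction m with
  | zero => simp [csfList]
  | succ m ih => rw [csfList_succ (m + 1), ih, csfList_succ m, List.append_assoc]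

lemma csfList_congr {m : ℕ} {a b b' : ℕ → ℕ} (h : ∀ i < m, b i = b' i) :
    csfList m a b = csfList m a b' :=
  List.flatMap_congr fun i hi => by rw [h i (by simpa using hi)]

lemma mem_csfList {m v : ℕ} {a b : ℕ → ℕ} :
    v ∈ csfList m a b ↔ ∃ j < m, a j ≤ v ∧ v ≤ b j := by
  simp only [csfList, List.mem_flatMap, List.mem_reverse, List.mem_range, List.mem_range']
  constructor
  · rintro ⟨j, hj, i, hi, rfl⟩
    exact ⟨j, hj, by omega, by omega⟩
  · rintro ⟨j, hj, h1, h2⟩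
    exact ⟨j, hj, v - a j, by omega, by omega⟩

lemma lt_of_mem_csfList {m v B : ℕ} {a b : ℕ → ℕ} (hB : ∀ j < m, b j < B)
    (hv : v ∈ csfList m a b) : v < B := by
  obtain ⟨j, hj, -, hle⟩ := mem_csfList.1 hv
  exact hle.trans_lt (hB j hj)

lemma csfList_isSuffix {j m : ℕ} (a b : ℕ → ℕ) (h : j ≤ m) :
    csfList j a b <:+ csfList m a b := by
  induction m, h using Nat.le_induction with
  | base => exact List.suffix_refl _
  | succ m _ ih => exact ih.trans (csfList_succ m a b ▸ List.suffix_append _ _)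

section CSF

variable {m : ℕ} {a b : ℕ → ℕ}

lemma numStrings_csfList_append (hmono : ∀ i j, i < j → j < m → b i < b j)
    (hab : ∀ j < m, a j ≤ b j) {v : List ℕ} (hv : ∀ j < m, b j + 1 ∉ v) :
    numStrings (csfList m a b ++ v) = numStrings v + m := by
  induction m with
  | zero => simp [csfList]
  | succ m ih =>
    have hnew : b m + 1 ∉ csfList m a b ++ v := by
      rw [List.mem_append, not_or]
      refine ⟨fun h => ?_, hv m (by omega)⟩
      have := lt_of_mem_csfList (fun j hj => hmono j m hj (by omega)) h
      omega
    obtain ⟨n, hn⟩ : ∃ n, b m + 1 - a m = n + 1 := ⟨b m - a m, by grind⟩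
    have hend : a m + n + 1 = b m + 1 := by grind
    rw [csfList_succ, List.append_assoc, hn, numStrings_range'_append, hend, if_neg hnew,
      ih (fun i j hij hj => hmono i j hij (by omega)) (fun j hj => hab j (by omega))
        (fun j hj => hv j (by omega))]
    ring

lemma StringCount.numStrings_eq {l : List ℕ} (h : StringCount l m) : numStrings l = m := by
  obtain ⟨a, b, hmono, hab, hequiv⟩ := h
  have hcsf := numStrings_csfList_append hmono hab (v := []) fun _ _ => List.not_mem_nil
  rw [List.append_nil, numStrings, zero_add] at hcsf
  rw [hequiv.numStrings_eq, hcsf]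

lemma SIP.succ_mem_of_append {U V : List ℕ} {z : ℕ} (h : SIP (U ++ z :: (V ++ [z]))) :
    z + 1 ∈ V := by
  have hlen : (U ++ z :: (V ++ [z])).length = U.length + V.length + 2 := by simp; omega
  have hfirst : (U ++ z :: (V ++ [z]))[U.length] = z := by simp
  have hlast : (U ++ z :: (V ++ [z]))[U.length + V.length + 1] = z := by grind
  obtain ⟨c, hc, hUc, hcV, hval⟩ := h U.length (U.length + V.length + 1) (by omega) (by omega)
    (by omega) (by simp only [List.get_eq_getElem, hfirst, hlast])
  simp only [List.get_eq_getElem, hfirst] at hval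
  rw [← hval]
  grind

lemma SIP.ne_head (hmono : ∀ i j, i < j → j < m → b i < b j) (hab : ∀ j < m, a j ≤ b j)
    {x : ℕ} (hsip : SIP (csfList m a b ++ [x])) (i : ℕ) (hi : i < m) : x ≠ b i := by
  rintro rfl
  obtain ⟨T, hT⟩ := csfList_isSuffix a b (Nat.succ_le_of_lt hi)
  have hstring : List.range' (a i) (b i + 1 - a i) = List.range' (a i) (b i - a i) ++ [b i] := by
    rw [show b i + 1 - a i = b i - a i + 1 by grind, List.range'_concat]
    grind
  rw [← hT, csfList_succ, hstring] at hsip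
  have hmem :=
    SIP.succ_mem_of_append (U := T ++ List.range' (a i) (b i - a i)) (by simpa using hsip)
  have := lt_of_mem_csfList (fun j hj => hmono j i hj hi) hmem
  omega

lemma tupleEquiv_csfList_append_succ_head {j : ℕ} (hlow : ∀ i < j, b i < b j) (hj : a j ≤ b j)
    (hm : j < m) :
    TupleEquiv (csfList m a b ++ [b j + 1]) (csfList m a (Function.update b j (b j + 1))) := by
  induction m, Nat.succ_le_of_lt hm using Nat.le_induction with
  | base =>
    have hbelow : csfList j a (Function.update b j (b j + 1)) = csfList j a b :=
      csfList_congr fun i hi => Function.update_of_ne hi.ne _ _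
    have hstring : List.range' (a j) (b j + 1 + 1 - a j) =
        List.range' (a j) (b j + 1 - a j) ++ [b j + 1] := by
      rw [show b j + 1 + 1 - a j = b j + 1 - a j + 1 by grind, List.range'_concat]
      grind
    rw [csfList_succ, csfList_succ, hbelow, Function.update_self, hstring, List.append_assoc,
      List.append_assoc, List.singleton_append]
    refine (TupleEquiv.concat_cons fun y hy => ?_).append_left _
    have := lt_of_mem_csfList hlow hy
    omega
  | succ m hjm ih =>
    rw [csfList_succ, csfList_succ, Function.update_of_ne (by omega), List.append_assoc]
    exact (ih (by omega)).append_left _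

lemma stringCount_csfList_append_succ_head (hmono : ∀ i j, i < j → j < m → b i < b j)
    (hab : ∀ j < m, a j ≤ b j) {j : ℕ} (hj : j < m) (hhead : ∀ i < m, b j + 1 ≠ b i) :
    StringCount (csfList m a b ++ [b j + 1]) m := by
  refine ⟨a, Function.update b j (b j + 1), fun i i' hii' hi' => ?_, fun i hi => ?_,
    tupleEquiv_csfList_append_succ_head (fun i hi => hmono i j hi hj) (hab j hj) hj⟩
  · have := hmono i i' hii' hi'
    have := hhead i' hi'
    simp only [Function.update_apply]
    split_ifs <;> grind
  · have := hab i hi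
    simp only [Function.update_apply]
    split_ifs with hij
    · subst hij; omega
    · exact this

lemma stringCount_csfList_append_zero (hmono : ∀ i j, i < j → j < m → b i < b j)
    (hab : ∀ j < m, a j ≤ b j) (hpos : ∀ j < m, 0 < b j) :
    StringCount (csfList m a b ++ [0]) (m + 1) := by
  refine ⟨fun i => if i = 0 then 0 else a (i - 1), fun i => if i = 0 then 0 else b (i - 1),
    fun i i' hii' hi' => ?_, fun i hi => ?_, ?_⟩
  · rcases i with _ | i
    · simpa [Nat.ne_zero_of_lt hii'] using hpos (i' - 1) (by omega)
    · simpa [Nat.ne_zero_of_lt hii'] using hmono i (i' - 1) (by omega) (by omega)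
  · rcases i with _ | i
    · simp
    · simpa using hab i (by omega)
  · simpa [csfList_succ_eq_append] using TupleEquiv.refl _

end CSF

theorem stmt17_general (s : ℕ) (a b : ℕ → ℕ)
    (hmono : ∀ i j : ℕ, i < j → j < s → b i < b j)
    (hab : ∀ j < s, a j ≤ b j)
    (x : ℕ)
    (hsip : SIP (csfList s a b ++ [x])) :
    (StringCount (csfList s a b ++ [x]) s ↔ ∃ j < s, x = b j + 1) ∧
    (x = 0 → StringCount (csfList s a b ++ [x]) (s + 1)) := by
  have hhead : ∀ i < s, x ≠ b i := hsip.ne_head hmono hab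
  refine ⟨⟨fun hcount => ?_, ?_⟩, ?_⟩
  · by_contra! htypeII
    have hsucc := numStrings_csfList_append hmono hab (v := [x]) fun j hj hmem =>
      htypeII j hj (List.mem_singleton.1 hmem).symm
    rw [hcount.numStrings_eq] at hsucc
    simp [numStrings] at hsucc
  · rintro ⟨j, hj, rfl⟩
    exact stringCount_csfList_append_succ_head hmono hab hj hhead
  · rintro rfl
    exact stringCount_csfList_append_zero hmono hab fun j hj => Nat.pos_of_ne_zero (hhead j hj).symm

/-- let `t = (a_{s-1}:b_{s-1}, ..., a_0:b_0)` be a nonempty tuple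
in column standard form with indices from `{0,...,k-1}` and let
`x ∈ {0,...,b_{s-1}-1}` be such that `(t, x)` satisfies the SIP.  Then `x` is of
Type I relative to `t` (the column standard form of `(t,x)` has `s` strings) iff
`x - 1` is a head of `t`, i.e. `x = b_j + 1` for some `j`; in particular `x = 0`
is always of Type II (the column standard form of `(t,0)` has `s+1` strings). -/
theorem stmt17 (k s : ℕ) (hs : 1 ≤ s) (hk : 1 ≤ k) (a b : ℕ → ℕ)
    (hmono : ∀ i j : ℕ, i < j → j < s → b i < b j)
    (hab : ∀ j < s, a j ≤ b j)
    (hbk : ∀ j < s, b j ≤ k - 1)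
    (x : ℕ) (hx : x < b (s - 1))
    (hsip : SIP (csfList s a b ++ [x])) :
    (StringCount (csfList s a b ++ [x]) s ↔ ∃ j < s, x = b j + 1) ∧
    (x = 0 → StringCount (csfList s a b ++ [x]) (s + 1)) :=
  stmt17_general s a b hmono hab x hsip
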